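/- Let P be a convex n-gon oriented counterclockwise and let {P(t) : 0 ≤ t ≤ c} be a decreasing path of n-gons with P(0) = P such that P(t) is non-degenerately contained in P for every t ∈ [0,c]. If p_i(c) ∈ ∂P for some index i, then either p_i(t) ∈ [p_{i-1}, p_i] \ {p_{i-1}} for all t ∈ [0,c], or p_i(t) ∈ [p_i, p_{i+1}] \ {p_{i+1}} for all t ∈ [0,c]. -/

import Mathlib

/-! A vertex never returns to an edge `e` of `P` once it has left it: otherwise, at the first time
`r` it is back on `e`, for all `t < r` the point `p_i(r) ∈ co(P(t)) ⊆ co(P)` lies on the supporting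
line of `e`, so it is a convex combination of those vertices of `P(t)` that lie on `e`, and these
exclude `p_i(t)`. Since the simplex of weights is compact, the limit `t → r` keeps `p_i(r)` in the
hull of the other vertices of `P(r)`, and dropping `p_i(r)` exhibits a degenerate containment.

Running this from `t = c` back to `t = 0` puts the vertex `p_i` on the edge carrying `p_i(c)`, so
that edge is adjacent to `p_i`. And `p_i(t)` never reaches the far endpoint `p_{i ± 1}`: the edge
beyond that endpoint would then have to contain `p_i`, which fails for `n ≥ 3`. -/

noncomputable section

abbrev Pt : Type := EuclideanSpace ℝ (Fin 2)

/-- Convex hull of the vertices of a polygon. -/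
def hull {n : ℕ} (P : Fin n → Pt) : Set Pt := convexHull ℝ (Set.range P)

/-- `P'` is degenerately contained in the `n`-gon `P`: there is an interpolating
`m`-gon with `m < n`. -/
def DegenIn {k n : ℕ} (P' : Fin k → Pt) (P : Fin n → Pt) : Prop :=
  ∃ m : ℕ, m < n ∧ ∃ Q : Fin m → Pt, hull P' ⊆ hull Q ∧ hull Q ⊆ hull P

/-- `P'` is obtained from `P` by a single pull-in move. -/
def PullIn {n : ℕ} (P P' : Fin n → Pt) : Prop :=
  ∃ i j : Fin n, i ≠ j ∧ P' i ∈ segment ℝ (P i) (P j) ∧ ∀ k, k ≠ i → P' k = P k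

/-- `P'` is obtained from `P` by a single push-out move (the inverse of a pull-in). -/
def PushOut {n : ℕ} (P P' : Fin n → Pt) : Prop :=
  ∃ i j : Fin n, i ≠ j ∧ P i ∈ segment ℝ (P j) (P' i) ∧ ∀ k, k ≠ i → P' k = P k

/-- A chain of exactly `m` moves (given by the relation `R`) from `P` to `P'`. -/
def MoveChain {n : ℕ} (R : (Fin n → Pt) → (Fin n → Pt) → Prop) (m : ℕ)
    (P P' : Fin n → Pt) : Prop :=
  ∃ Q : Fin (m + 1) → Fin n → Pt, Q 0 = P ∧ Q (Fin.last m) = P' ∧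
    ∀ s : Fin m, R (Q s.castSucc) (Q s.succ)

/-- `P'` is attainable from `P` by a decreasing path of polygons. -/
def Attainable {n : ℕ} (P P' : Fin n → Pt) : Prop :=
  ∃ c : ℝ, 0 ≤ c ∧ ∃ F : ℝ → Fin n → Pt,
    ContinuousOn F (Set.Icc 0 c) ∧ F 0 = P ∧ F c = P' ∧
    ∀ t t' : ℝ, t ∈ Set.Icc 0 c → t' ∈ Set.Icc 0 c → t ≤ t' → hull (F t') ⊆ hull (F t)

/-- Determinant of the 3×3 matrix with rows (a,1), (b,1), (c,1). -/
def det3 (a b c : Pt) : ℝ := (b 0 - a 0) * (c 1 - a 1) - (b 1 - a 1) * (c 0 - a 0)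

/-- `P` is a convex polygon oriented counterclockwise. -/
def CCW {n : ℕ} [NeZero n] (P : Fin n → Pt) : Prop :=
  ∀ i j : Fin n, j ≠ i → j ≠ i + 1 → 0 < det3 (P i) (P (i + 1)) (P j)

/-- The boundary of a polygon: the union of its edges. -/
def bdry {n : ℕ} [NeZero n] (P : Fin n → Pt) : Set Pt :=
  ⋃ i : Fin n, segment ℝ (P i) (P (i + 1))

/-- The threshold set of `P`: attainable polygons with a vertex on `∂P`. -/
def Threshold {n : ℕ} [NeZero n] (P : Fin n → Pt) : Set (Fin n → Pt) :=
  {P' | Attainable P P' ∧ ∃ i, P' i ∈ bdry P}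

/-- A neighbor pull-in move: a pull-in of a vertex toward one of its two neighbors. -/
def NbrPullIn {n : ℕ} [NeZero n] (P P' : Fin n → Pt) : Prop :=
  ∃ i j : Fin n, (j = i - 1 ∨ j = i + 1) ∧ i ≠ j ∧ P' i ∈ segment ℝ (P i) (P j) ∧
    ∀ k, k ≠ i → P' k = P k

/-- The vestibule of `P`: polygons one neighbor pull-in move away from the threshold. -/
def Vestibule {n : ℕ} [NeZero n] (P : Fin n → Pt) : Set (Fin n → Pt) :=
  {P' | ∃ Q ∈ Threshold P, NbrPullIn Q P'}

/-- A polygon is set-convex if no vertex lies in the convex hull of the others. -/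
def SetConvex {n : ℕ} (P : Fin n → Pt) : Prop :=
  ∀ i : Fin n, P i ∉ convexHull ℝ (P '' {j | j ≠ i})

/-- A maximal degenerate `(n-1)`-gon inscribed in the convex `n`-gon `P`. -/
def MaxDegen {n : ℕ} [NeZero n] (P : Fin n → Pt) (Q : Fin (n - 1) → Pt) : Prop :=
  (∀ k, Q k ∈ bdry P) ∧
  ∀ k : Fin (n - 1),
    (∃ i : Fin n, Q k = P i ∧ ∀ k' : Fin (n - 1), k' ≠ k → Q k' ≠ P i) ∨
    (∃ i : Fin n, Q k ∈ segment ℝ (P i) (P (i + 1)) ∧ (∀ j : Fin n, Q k ≠ P j) ∧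
      ∀ k' : Fin (n - 1), k' ≠ k → Q k' ∉ segment ℝ (P i) (P (i + 1)))

/-- Area of a polygon: the Lebesgue measure of its convex hull. -/
def area {n : ℕ} (P : Fin n → Pt) : ℝ := (MeasureTheory.volume (hull P)).toReal

/-- `P'` is in the midpoint pockets of `P`. -/
def MidpointPockets {n : ℕ} [NeZero n] (P P' : Fin n → Pt) : Prop :=
  ∀ i : Fin n,
    P' i ∈ convexHull ℝ
      ({midpoint ℝ (P (i - 1)) (P i), P i, midpoint ℝ (P i) (P (i + 1))} : Set Pt) ∧
    P i ∉ segment ℝ (midpoint ℝ (P (i - 1)) (P i)) (midpoint ℝ (P i) (P (i + 1)))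

/-- A row stochastic matrix. -/
def RowStochastic {n : ℕ} (D : Matrix (Fin n) (Fin n) ℝ) : Prop :=
  (∀ i j, 0 ≤ D i j) ∧ ∀ i, ∑ j, D i j = 1

/-- A continuous-time non-homogeneous Markov process of `n` states. -/
def IsMarkovProcess (n : ℕ) (M : ℝ → ℝ → Matrix (Fin n) (Fin n) ℝ) : Prop :=
  ContinuousOn (fun p : ℝ × ℝ => M p.1 p.2) {p : ℝ × ℝ | 0 ≤ p.1 ∧ p.1 ≤ p.2} ∧
  (∀ s t : ℝ, 0 ≤ s → s ≤ t → IsUnit (M s t).det ∧ RowStochastic (M s t)) ∧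
  (∀ r s t : ℝ, 0 ≤ r → r ≤ s → s ≤ t → M r t = M r s * M s t) ∧
  (∀ t : ℝ, 0 ≤ t → M t t = 1)

/-- An embeddable stochastic matrix. -/
def Embeddable {n : ℕ} (D : Matrix (Fin n) (Fin n) ℝ) : Prop :=
  ∃ M : ℝ → ℝ → Matrix (Fin n) (Fin n) ℝ, IsMarkovProcess n M ∧
    ∃ s t : ℝ, 0 ≤ s ∧ s ≤ t ∧ D = M s t

/-- The elementary stochastic matrix `K^{ij}(c)`. -/
def elemStoch {n : ℕ} (i j : Fin n) (c : ℝ) : Matrix (Fin n) (Fin n) ℝ :=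
  1 + c • (Matrix.single i j 1 - Matrix.single i i 1)

open Set

section ConvexGeometry

variable {E : Type*} [AddCommGroup E] [Module ℝ E]

theorem mem_convexHull_inter_preimage_zero {f : E →ᵃ[ℝ] ℝ} {s : Set E}
    (hs : ∀ x ∈ s, 0 ≤ f x) {y : E} (hy : y ∈ convexHull ℝ s) (hfy : f y = 0) :
    y ∈ convexHull ℝ (s ∩ f ⁻¹' {0}) := by
  set Z := convexHull ℝ (s ∩ f ⁻¹' {0})
  have hfZ : ∀ z ∈ Z, f z = 0 := fun z hz =>
    convexHull_min inter_subset_right ((convex_singleton 0).affine_preimage f) hz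
  -- `{0 < f} ∪ Z` is convex and contains `s`, hence contains `y`
  have hT : Convex ℝ ({x | 0 < f x} ∪ Z) := by
    intro x hx z hz a b ha hb hab
    rcases ha.eq_or_lt with rfl | ha
    · rw [zero_add] at hab; simpa [hab] using hz
    rcases hb.eq_or_lt with rfl | hb
    · rw [add_zero] at hab; simpa [hab] using hx
    by_cases hxz : x ∈ Z ∧ z ∈ Z
    · exact Or.inr (convex_convexHull ℝ _ hxz.1 hxz.2 ha.le hb.le hab)
    have hx0 : 0 ≤ f x := hx.elim (fun h => h.le) fun h => (hfZ x h).ge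
    have hz0 : 0 ≤ f z := hz.elim (fun h => h.le) fun h => (hfZ z h).ge
    have hpos : 0 < f x ∨ 0 < f z := by
      rcases hx with hx | hx <;> rcases hz with hz | hz <;> tauto
    left
    rw [mem_ofPred_eq, Convex.combo_affine_apply hab, smul_eq_mul, smul_eq_mul]
    rcases hpos with h | h
    · exact add_pos_of_pos_of_nonneg (mul_pos ha h) (mul_nonneg hb.le hz0)
    · exact add_pos_of_nonneg_of_pos (mul_nonneg ha.le hx0) (mul_pos hb h)
  have hsT : s ⊆ {x | 0 < f x} ∪ Z := fun x hx =>
    (hs x hx).lt_or_eq.imp id fun h => subset_convexHull ℝ _ ⟨hx, h.symm⟩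
  exact (convexHull_min hsT hT hy).resolve_left hfy.not_gt

variable {ι : Type*} [Fintype ι]

theorem convexHull_range_eq_image_stdSimplex (v : ι → E) :
    convexHull ℝ (range v) = (fun w => ∑ k, w k • v k) '' stdSimplex ℝ ι := by
  classical
  have hL : (fun w : ι → ℝ => ∑ k, w k • v k) = Fintype.linearCombination ℝ v :=
    funext fun w => (Fintype.linearCombination_apply ℝ v w).symm
  rw [← convexHull_basis_eq_stdSimplex, hL, LinearMap.image_convexHull, ← range_comp]
  congr 2
  ext k
  simp [Fintype.linearCombination_apply, ite_smul]

theorem IsCompact.setOf_mem_convexHull_range [TopologicalSpace E] [IsTopologicalAddGroup E]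
    [ContinuousSMul ℝ E] [T2Space E] {X : Type*} [TopologicalSpace X] [T2Space X] {K : Set X}
    (hK : IsCompact K) {g : X → ι → E} (hg : ContinuousOn g K) (y : E) :
    IsCompact {x ∈ K | y ∈ convexHull ℝ (range (g x))} := by
  let f : (ι → ℝ) × X → E := fun p => ∑ k, p.1 k • g p.2 k
  have hC : IsCompact (stdSimplex ℝ ι ×ˢ K) := (isCompact_stdSimplex ℝ ι).prod hK
  have hf : ContinuousOn f (stdSimplex ℝ ι ×ˢ K) := by
    refine continuousOn_finsetSum _ fun k _ => ?_
    exact ((continuous_apply k).comp continuous_fst).continuousOn.smul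
      ((continuous_apply k).comp_continuousOn (hg.comp continuousOn_snd fun p hp => hp.2))
  have hproj : {x ∈ K | y ∈ convexHull ℝ (range (g x))} =
      Prod.snd '' (stdSimplex ℝ ι ×ˢ K ∩ f ⁻¹' {y}) := by
    ext x
    simp only [convexHull_range_eq_image_stdSimplex, mem_ofPred_eq, mem_image, mem_inter_iff,
      mem_prod, mem_preimage, mem_singleton_iff, Prod.exists, exists_eq_right, f]
    tauto
  rw [hproj]
  exact (hC.of_isClosed_subset (hf.preimage_isClosed_of_isClosed hC.isClosed isClosed_singleton)
    inter_subset_left).image continuous_snd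

end ConvexGeometry

theorem IsClosed.exists_mem_Ioc_forall_Ico_notMem {α : Type*} [ConditionallyCompleteLinearOrder α]
    [TopologicalSpace α] [OrderTopology α] {A : Set α} (hA : IsClosed A) {s t : α} (hs : s ∉ A)
    (ht : t ∈ A) (hst : s ≤ t) : ∃ r ∈ Ioc s t, r ∈ A ∧ ∀ u ∈ Ico s r, u ∉ A := by
  have hB : (A ∩ Icc s t).Nonempty := ⟨t, ht, hst, le_rfl⟩
  have hBbdd : BddBelow (A ∩ Icc s t) := ⟨s, fun u hu => hu.2.1⟩
  obtain ⟨hrA, hsr, hrt⟩ := (hA.inter isClosed_Icc).csInf_mem hB hBbdd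
  refine ⟨_, ⟨hsr.lt_of_ne ?_, hrt⟩, hrA, fun u hu huA => ?_⟩
  · rintro h; exact hs (h ▸ hrA)
  · exact (csInf_le hBbdd ⟨huA, hu.1, hu.2.le.trans hrt⟩).not_gt hu.2

theorem Fin.add_one_ne_self {n : ℕ} [NeZero n] (hn : 2 ≤ n) (x : Fin n) : x + 1 ≠ x := by
  rw [Ne, add_eq_left, Fin.ext_iff, Fin.val_zero]
  simp [Nat.mod_eq_of_lt (show 1 < n by omega)]

theorem Fin.add_one_add_one_ne_self {n : ℕ} [NeZero n] (hn : 3 ≤ n) (x : Fin n) :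
    x + 1 + 1 ≠ x := by
  rw [Ne, add_assoc, add_eq_left, Fin.ext_iff, Fin.val_zero, Fin.val_add]
  simp [Nat.mod_eq_of_lt (show 1 < n by omega), Nat.mod_eq_of_lt (show 2 < n by omega)]

def det3AffineMap (a b : Pt) : Pt →ᵃ[ℝ] ℝ where
  toFun := det3 a b
  linear := (b 0 - a 0) • (EuclideanSpace.proj 1 : Pt →L[ℝ] ℝ).toLinearMap
    - (b 1 - a 1) • (EuclideanSpace.proj 0 : Pt →L[ℝ] ℝ).toLinearMap
  map_vadd' p v := by simp [det3]; ring

@[simp] theorem det3_self_left (a b : Pt) : det3 a b a = 0 := by simp only [det3]; ring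

@[simp] theorem det3_self_right (a b : Pt) : det3 a b b = 0 := by simp only [det3]; ring

theorem det3_eq_zero_of_mem_segment {a b x : Pt} (hx : x ∈ segment ℝ a b) : det3 a b x = 0 := by
  rw [← convexHull_pair] at hx
  refine convexHull_min ?_ ((convex_singleton 0).affine_preimage (det3AffineMap a b)) hx
  rintro _ (rfl | rfl)
  exacts [det3_self_left _ _, det3_self_right _ _]

theorem DegenIn.of_mem_convexHull_image_ne {n : ℕ} {G P : Fin n → Pt}
    (hG : hull G ⊆ hull P) (i : Fin n) (hi : G i ∈ convexHull ℝ (G '' {m | m ≠ i})) :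
    DegenIn G P := by
  obtain ⟨n, rfl⟩ := Nat.exists_eq_add_one_of_ne_zero i.pos.ne'
  have hrange : range (G ∘ i.succAbove) = G '' {m | m ≠ i} := by
    rw [range_comp, Fin.range_succAbove, compl_singleton_eq]
  refine ⟨n, n.lt_succ_self, G ∘ i.succAbove, ?_,
    (convexHull_mono (range_comp_subset_range _ _)).trans hG⟩
  refine convexHull_min ?_ (convex_convexHull ℝ _)
  rintro _ ⟨m, rfl⟩
  rw [hull, hrange]
  by_cases hm : m = i
  · exact hm ▸ hi
  · exact subset_convexHull ℝ _ ⟨m, hm, rfl⟩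

namespace CCW

variable {n : ℕ} [NeZero n] {P : Fin n → Pt}

theorem det3_nonneg (hP : CCW P) (j m : Fin n) : 0 ≤ det3 (P j) (P (j + 1)) (P m) := by
  by_cases h₁ : m = j
  · simp [h₁]
  by_cases h₂ : m = j + 1
  · simp [h₂]
  exact (hP j m h₁ h₂).le

theorem det3_nonneg_of_mem_hull (hP : CCW P) (j : Fin n) {y : Pt} (hy : y ∈ hull P) :
    0 ≤ det3 (P j) (P (j + 1)) y := by
  refine convexHull_min ?_ ((convex_Ici 0).affine_preimage (det3AffineMap (P j) (P (j + 1)))) hy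
  rintro _ ⟨m, rfl⟩
  exact hP.det3_nonneg j m

theorem mem_segment_of_det3_eq_zero (hP : CCW P) (j : Fin n) {y : Pt} (hy : y ∈ hull P)
    (hdet : det3 (P j) (P (j + 1)) y = 0) : y ∈ segment ℝ (P j) (P (j + 1)) := by
  have hface := mem_convexHull_inter_preimage_zero (f := det3AffineMap (P j) (P (j + 1)))
    (fun x hx => hP.det3_nonneg_of_mem_hull j (subset_convexHull ℝ _ hx)) hy hdet
  rw [← convexHull_pair]
  refine convexHull_mono ?_ hface
  rintro _ ⟨⟨m, rfl⟩, hm⟩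
  by_contra h
  simp only [mem_insert_iff, mem_singleton_iff, not_or] at h
  exact (hP j m (fun e => h.1 (e ▸ rfl)) (fun e => h.2 (e ▸ rfl))).ne' hm

theorem eq_or_eq_add_one_of_mem_segment (hP : CCW P) {m j : Fin n}
    (h : P m ∈ segment ℝ (P j) (P (j + 1))) : m = j ∨ m = j + 1 := by
  by_contra! hm
  exact (hP j m hm.1 hm.2).ne' (det3_eq_zero_of_mem_segment h)

theorem mem_convexHull_image_ne (hP : CCW P) {m : ℕ} {Q : Fin m → Pt} (hQ : hull Q ⊆ hull P)
    {j : Fin n} {y : Pt} (hy : y ∈ hull Q) (hyE : y ∈ segment ℝ (P j) (P (j + 1))) {i : Fin m}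
    (hi : Q i ∉ segment ℝ (P j) (P (j + 1))) : y ∈ convexHull ℝ (Q '' {k | k ≠ i}) := by
  have hQP : ∀ k, Q k ∈ hull P := fun k => hQ (subset_convexHull ℝ _ ⟨k, rfl⟩)
  have hface := mem_convexHull_inter_preimage_zero (f := det3AffineMap (P j) (P (j + 1)))
    (by rintro _ ⟨k, rfl⟩; exact hP.det3_nonneg_of_mem_hull j (hQP k)) hy
    (det3_eq_zero_of_mem_segment hyE)
  refine convexHull_mono ?_ hface
  rintro _ ⟨⟨k, rfl⟩, hk⟩
  refine ⟨k, fun hki => hi ?_, rfl⟩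
  exact hki ▸ hP.mem_segment_of_det3_eq_zero j (hQP k) hk

theorem mem_segment_of_mem_segment_of_le (hP : CCW P) {c : ℝ} {F : ℝ → Fin n → Pt}
    (hcont : ContinuousOn F (Icc 0 c))
    (hdec : ∀ t t' : ℝ, t ∈ Icc 0 c → t' ∈ Icc 0 c → t ≤ t' → hull (F t') ⊆ hull (F t))
    (hnd : ∀ t ∈ Icc (0 : ℝ) c, hull (F t) ⊆ hull P ∧ ¬ DegenIn (F t) P)
    {i j : Fin n} {s t : ℝ} (hs : 0 ≤ s) (hst : s ≤ t) (htc : t ≤ c)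
    (ht : F t i ∈ segment ℝ (P j) (P (j + 1))) : F s i ∈ segment ℝ (P j) (P (j + 1)) := by
  have hsub : Icc s t ⊆ Icc 0 c := Icc_subset_Icc hs htc
  by_contra hsE
  have hEclosed : IsClosed (segment ℝ (P j) (P (j + 1))) :=
    convexHull_pair (𝕜 := ℝ) (P j) (P (j + 1)) ▸ (toFinite _).isClosed_convexHull ℝ
  have hA : IsClosed (Icc s t ∩ (fun u => F u i) ⁻¹' segment ℝ (P j) (P (j + 1))) :=
    ((continuous_apply i).comp_continuousOn (hcont.mono hsub)).preimage_isClosed_of_isClosed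
      isClosed_Icc hEclosed
  obtain ⟨r, ⟨hsr, hrt⟩, hrE, hbefore⟩ :=
    hA.exists_mem_Ioc_forall_Ico_notMem (fun h => hsE h.2) ⟨⟨hst, le_rfl⟩, ht⟩ hst
  have hr : r ∈ Icc 0 c := hsub ⟨hsr.le, hrt⟩
  set S := {u ∈ Icc s r | F r i ∈ convexHull ℝ (F u '' {k | k ≠ i})}
  have hIco : Ico s r ⊆ S := by
    intro u hu
    have hu' : u ∈ Icc 0 c := hsub ⟨hu.1, hu.2.le.trans hrt⟩
    refine ⟨Ico_subset_Icc_self hu, hP.mem_convexHull_image_ne (hnd u hu').1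
      (hdec u r hu' hr hu.2.le (subset_convexHull ℝ _ ⟨i, rfl⟩)) hrE.2
      (fun h => hbefore u hu ⟨⟨hu.1, hu.2.le.trans hrt⟩, h⟩)⟩
  have hS : IsClosed S := by
    simp only [S, image_eq_range]
    have hcont' : ContinuousOn (fun u (k : ({k | k ≠ i} : Set (Fin n))) => F u k) (Icc s r) :=
      (continuous_pi fun k : ({k | k ≠ i} : Set (Fin n)) => continuous_apply k.1).comp_continuousOn
        (hcont.mono (Icc_subset_Icc hs (hrt.trans htc)))
    exact (isCompact_Icc.setOf_mem_convexHull_range hcont' _).isClosed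
  have hrS : r ∈ S :=
    hS.closure_subset_iff.2 hIco (by rw [closure_Ico hsr.ne]; exact right_mem_Icc.2 hsr.le)
  exact (hnd r hr).2 (DegenIn.of_mem_convexHull_image_ne (hnd r hr).1 i hrS.2)

end CCW

/-- If along a decreasing path of polygons non-degenerately contained
in the convex `n`-gon `P` the vertex `p_i(c)` ends up on `∂P`, then `p_i(t)` stays
on one of the two half-open edges of `P` adjacent to `p_i` for all `t`. -/
theorem statement16 (n : ℕ) (hn : 3 ≤ n) [NeZero n] (P : Fin n → Pt) (hP : CCW P)
    (c : ℝ) (hc : 0 ≤ c) (F : ℝ → Fin n → Pt)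
    (hcont : ContinuousOn F (Set.Icc 0 c)) (h0 : F 0 = P)
    (hdec : ∀ t t' : ℝ, t ∈ Set.Icc 0 c → t' ∈ Set.Icc 0 c → t ≤ t' →
      hull (F t') ⊆ hull (F t))
    (hnd : ∀ t ∈ Set.Icc (0 : ℝ) c, hull (F t) ⊆ hull P ∧ ¬ DegenIn (F t) P)
    (i : Fin n) (hi : F c i ∈ bdry P) :
    (∀ t ∈ Set.Icc (0 : ℝ) c,
        F t i ∈ segment ℝ (P (i - 1)) (P i) ∧ F t i ≠ P (i - 1)) ∨
    (∀ t ∈ Set.Icc (0 : ℝ) c,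
        F t i ∈ segment ℝ (P i) (P (i + 1)) ∧ F t i ≠ P (i + 1)) := by
  have hback : ∀ {s t : ℝ} {k : Fin n}, 0 ≤ s → s ≤ t → t ≤ c →
      F t i ∈ segment ℝ (P k) (P (k + 1)) → F s i ∈ segment ℝ (P k) (P (k + 1)) :=
    hP.mem_segment_of_mem_segment_of_le hcont hdec hnd
  have hvertex : ∀ t ∈ Icc (0 : ℝ) c, ∀ {m k : Fin n}, F t i = P m →
      P m ∈ segment ℝ (P k) (P (k + 1)) → i = k ∨ i = k + 1 := fun t ht m k heq hk =>
    hP.eq_or_eq_add_one_of_mem_segment (h0 ▸ hback le_rfl ht.1 ht.2 (heq ▸ hk))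
  obtain ⟨j, hj⟩ := mem_iUnion.1 hi
  have hstay : ∀ t ∈ Icc (0 : ℝ) c, F t i ∈ segment ℝ (P j) (P (j + 1)) :=
    fun t ht => hback ht.1 ht.2 le_rfl hj
  rcases hP.eq_or_eq_add_one_of_mem_segment (h0 ▸ hback le_rfl hc le_rfl hj) with rfl | rfl
  · refine Or.inr fun t ht => ⟨hstay t ht, fun heq => ?_⟩
    rcases hvertex t ht heq (left_mem_segment ℝ _ _) with h | h
    · exact Fin.add_one_ne_self (by omega) i h.symm
    · exact Fin.add_one_add_one_ne_self hn i h.symm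
  · refine Or.inl fun t ht => ?_
    rw [add_sub_cancel_right]
    refine ⟨hstay t ht, fun heq => ?_⟩
    rcases hvertex t ht heq (k := j - 1) (by rw [sub_add_cancel]; exact right_mem_segment ℝ _ _)
      with h | h
    · exact Fin.add_one_add_one_ne_self hn j (eq_sub_iff_add_eq.1 h)
    · exact Fin.add_one_ne_self (by omega) j (by rwa [sub_add_cancel] at h)

end
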